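/- arXiv:2502.14049 — 4 statements merged into one kernel-verified Lean document; each statement's English description precedes it below -/
import Mathlib

section
/- Let u : ℝⁿ → ℝᵐ be a continuous, nonconstant map, let x₁ ≠ x₂ be points with u(x₁) = u(x₂) = 0, and suppose there are real numbers α₁, α₂ > 0 such that for each i ∈ {1,2}, all z ∈ ℝⁿ and all λ > 0 one has u(xᵢ + λz) = λ^{αᵢ} u(xᵢ + z). Then α₁ = α₂ and u is invariant under translation in the direction x₁ − x₂, i.e. u(y + t(x₁ − x₂)) = u(y) for all y ∈ ℝⁿ and t ∈ ℝ. -/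
/-!
Homogeneity about `x₁` and `x₂` combine into a scaling law along `e = x₁ - x₂`: contracting
towards `x₁` by `μ⁻¹` and then expanding from `x₂` by `μ` is the translation by `(μ - 1) • e`,
so `u (x + (μ - 1) • e) = μ ^ (α₂ - α₁) • u x`. Translating by `2 • e` in one step or in two
steps of `e` gives `3 ^ (α₂ - α₁) = 4 ^ (α₂ - α₁)` at a point where `u ≠ 0`, hence `α₁ = α₂`,
and then `u` is invariant under all translations `s • e` with `s > -1`, hence under all of them.
-/

open Real

variable {E : Type*} [AddCommGroup E] [Module ℝ E]

theorem map_add_smul_eq_of_forall_gt_neg_one {β : Type*} {u : E → β} {v : E}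
    (h : ∀ (x : E) (s : ℝ), -1 < s → u (x + s • v) = u x) (x : E) (t : ℝ) :
    u (x + t • v) = u x := by
  rcases lt_or_ge (-1) t with ht | ht
  · exact h x t ht
  · have hback := h (x + t • v) (-t) (by linarith)
    rwa [neg_smul, add_neg_cancel_right, eq_comm] at hback

variable {F : Type*} [AddCommGroup F] [Module ℝ F]

/-- Unlike the paper's notion, this does not require `u x₀ = 0`. -/
def HomogeneousAbout (u : E → F) (x₀ : E) (α : ℝ) : Prop :=
  ∀ (z : E) (l : ℝ), 0 < l → u (x₀ + l • z) = l ^ α • u (x₀ + z)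

theorem HomogeneousAbout.map_add_smul_sub {u : E → F} {x₁ x₂ : E} {α₁ α₂ : ℝ}
    (h₁ : HomogeneousAbout u x₁ α₁) (h₂ : HomogeneousAbout u x₂ α₂) (x : E) {s : ℝ}
    (hs : -1 < s) : u (x + s • (x₁ - x₂)) = (1 + s) ^ (α₂ - α₁) • u x := by
  have hμ : 0 < 1 + s := by linarith
  have hcontract : u (x₁ + (1 + s)⁻¹ • (x - x₁)) = (1 + s)⁻¹ ^ α₁ • u x := by
    simpa using h₁ (x - x₁) _ (inv_pos.mpr hμ)
  have hexpand := h₂ (x₁ + (1 + s)⁻¹ • (x - x₁) - x₂) _ hμ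
  have hcomposite : x₂ + (1 + s) • (x₁ + (1 + s)⁻¹ • (x - x₁) - x₂) = x + s • (x₁ - x₂) := by
    match_scalars <;> field_simp <;> ring
  rw [hcomposite, add_sub_cancel, hcontract, smul_smul] at hexpand
  rw [hexpand, inv_rpow hμ.le, ← rpow_neg hμ.le, ← rpow_add hμ, ← sub_eq_add_neg]

theorem HomogeneousAbout.degree_eq {u : E → F} {x₁ x₂ : E} {α₁ α₂ : ℝ}
    (h₁ : HomogeneousAbout u x₁ α₁) (h₂ : HomogeneousAbout u x₂ α₂) {x : E} (hx : u x ≠ 0) :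
    α₁ = α₂ := by
  set e := x₁ - x₂
  have hone_step : u (x + (2 : ℝ) • e) = (3 : ℝ) ^ (α₂ - α₁) • u x := by
    rw [h₁.map_add_smul_sub h₂ x (by norm_num)]; norm_num
  have htwo_steps : u (x + (2 : ℝ) • e) = (4 : ℝ) ^ (α₂ - α₁) • u x := by
    rw [two_smul, ← add_assoc, ← one_smul ℝ e, h₁.map_add_smul_sub h₂ _ (by norm_num),
      h₁.map_add_smul_sub h₂ x (by norm_num), smul_smul,
      ← mul_rpow (by norm_num) (by norm_num)]
    norm_num
  have hpow : (3 : ℝ) ^ (α₂ - α₁) = (4 : ℝ) ^ (α₂ - α₁) :=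
    smul_left_injective ℝ hx (hone_step.symm.trans htwo_steps)
  by_contra hne
  have := (rpow_left_inj (by norm_num) (by norm_num) (sub_ne_zero.mpr (Ne.symm hne))).mp hpow
  norm_num at this

theorem two_point_homogeneity_general {n m : ℕ} (u : (Fin n → ℝ) → (Fin m → ℝ))
    (hnc : ∃ a b, u a ≠ u b)
    (x₁ x₂ : Fin n → ℝ)
    (α₁ α₂ : ℝ)
    (hhom₁ : ∀ (z : Fin n → ℝ) (l : ℝ), 0 < l → u (x₁ + l • z) = l ^ α₁ • u (x₁ + z))
    (hhom₂ : ∀ (z : Fin n → ℝ) (l : ℝ), 0 < l → u (x₂ + l • z) = l ^ α₂ • u (x₂ + z)) :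
    α₁ = α₂ ∧ ∀ (y : Fin n → ℝ) (t : ℝ), u (y + t • (x₁ - x₂)) = u y := by
  have h₁ : HomogeneousAbout u x₁ α₁ := hhom₁
  have h₂ : HomogeneousAbout u x₂ α₂ := hhom₂
  obtain ⟨x, hx⟩ : ∃ x, u x ≠ 0 := by
    by_contra! hzero
    obtain ⟨a, b, hab⟩ := hnc
    exact hab (by rw [hzero a, hzero b])
  have hα : α₁ = α₂ := h₁.degree_eq h₂ hx
  refine ⟨hα, map_add_smul_eq_of_forall_gt_neg_one fun y s hs => ?_⟩
  rw [h₁.map_add_smul_sub h₂ y hs, hα, sub_self, rpow_zero, one_smul]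

/-- Two-point homogeneity: if a continuous nonconstant map `u : ℝⁿ → ℝᵐ` is homogeneous of
degree `α₁ > 0` about `x₁` and of degree `α₂ > 0` about `x₂` with `x₁ ≠ x₂`, then `α₁ = α₂`
and `u` is invariant under translations in the direction `x₁ - x₂`. -/
theorem two_point_homogeneity {n m : ℕ} (u : (Fin n → ℝ) → (Fin m → ℝ))
    (hcont : Continuous u) (hnc : ∃ a b, u a ≠ u b)
    (x₁ x₂ : Fin n → ℝ) (hne : x₁ ≠ x₂)
    (α₁ α₂ : ℝ) (hα₁ : 0 < α₁) (hα₂ : 0 < α₂)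
    (hu₁ : u x₁ = 0) (hu₂ : u x₂ = 0)
    (hhom₁ : ∀ (z : Fin n → ℝ) (l : ℝ), 0 < l → u (x₁ + l • z) = l ^ α₁ • u (x₁ + z))
    (hhom₂ : ∀ (z : Fin n → ℝ) (l : ℝ), 0 < l → u (x₂ + l • z) = l ^ α₂ • u (x₂ + z)) :
    α₁ = α₂ ∧ ∀ (y : Fin n → ℝ) (t : ℝ), u (y + t • (x₁ - x₂)) = u y :=
  two_point_homogeneity_general u hnc x₁ x₂ α₁ α₂ hhom₁ hhom₂
end

section
/- Let u : ℝⁿ → ℝᵐ be continuous and nonconstant, and suppose u is homogeneous of the same degree α > 0 about each of the points x₀, x₁, …, x_k ∈ ℝⁿ, where the vectors x₁ − x₀, …, x_k − x₀ are linearly independent. Then u is invariant under translations by any vector in V = span{x₁ − x₀, …, x_k − x₀}: u(y + v) = u(y) for all y ∈ ℝⁿ and v ∈ V. Consequently u is homogeneous of degree α about every point of the affine subspace x₀ + V. -/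
/-!
Comparing the homogeneity laws about `p` and `q` at the same scale `l` gives
`u (q + z) = u (p + l⁻¹ • (q - p) + z)` for every `l > 0`; letting `l → ∞` and using continuity,
`u (q + z) = u (p + z)`, so `q - p` is a period of `u`. Homogeneity about a point carries periods
to all their positive multiples, so the periods of `u` form a subspace, which therefore contains
`span {x i - x 0}`. Translating by a period moves the centre of homogeneity along it.
-/

open Filter Function Topology

/-- The scaling law of homogeneity of degree `α` about `p`; the vanishing `u p = 0` that the
paper also requires is kept as a separate hypothesis. -/
def IsHomogeneousAbout {E F : Type*} [AddCommGroup E] [Module ℝ E] [AddCommGroup F] [Module ℝ F]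
    (u : E → F) (α : ℝ) (p : E) : Prop :=
  ∀ (z : E) (l : ℝ), 0 < l → u (p + l • z) = l ^ α • u (p + z)

namespace IsHomogeneousAbout

variable {E F : Type*} [AddCommGroup E] [Module ℝ E] [AddCommGroup F] [Module ℝ F]
  {u : E → F} {α : ℝ} {p q v : E}

theorem periodic_pos_smul (hp : IsHomogeneousAbout u α p) (hv : Periodic u v) {c : ℝ}
    (hc : 0 < c) : Periodic u (c • v) := by
  intro y
  obtain ⟨w, rfl⟩ : ∃ w, y = p + c • w :=
    ⟨c⁻¹ • (y - p), by rw [smul_smul, mul_inv_cancel₀ hc.ne', one_smul, add_sub_cancel]⟩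
  calc u (p + c • w + c • v) = u (p + c • (w + v)) := by rw [smul_add, add_assoc]
    _ = c ^ α • u (p + w + v) := by rw [hp _ c hc, add_assoc]
    _ = u (p + c • w) := by rw [hv, hp _ c hc]

theorem periodic_smul (hp : IsHomogeneousAbout u α p) (hv : Periodic u v) (c : ℝ) :
    Periodic u (c • v) := by
  rcases lt_trichotomy c 0 with hc | rfl | hc
  · simpa using (hp.periodic_pos_smul hv (neg_pos.mpr hc)).neg
  · simp [Periodic]
  · exact hp.periodic_pos_smul hv hc

theorem periodic_of_mem_span (hp : IsHomogeneousAbout u α p) {s : Set E}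
    (hs : ∀ w ∈ s, Periodic u w) (hv : v ∈ Submodule.span ℝ s) : Periodic u v := by
  induction hv using Submodule.span_induction with
  | mem w hw => exact hs w hw
  | zero => simp [Periodic]
  | add a b _ _ ha hb => exact ha.add_period hb
  | smul c a _ ha => exact hp.periodic_smul ha c

theorem add_period (hp : IsHomogeneousAbout u α p) (hv : Periodic u v) :
    IsHomogeneousAbout u α (p + v) := by
  intro z l hl
  rw [add_right_comm, hv, add_right_comm, hv, hp z l hl]

theorem apply_add_eq_apply_add_inv_smul (hp : IsHomogeneousAbout u α p)
    (hq : IsHomogeneousAbout u α q) (z : E) {l : ℝ} (hl : 0 < l) :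
    u (q + z) = u (p + l⁻¹ • (q - p) + z) := by
  have hscale : q + l • z = p + l • (l⁻¹ • (q - p) + z) := by
    rw [smul_add, smul_smul, mul_inv_cancel₀ hl.ne', one_smul, ← add_assoc, add_sub_cancel]
  have h := hq z l hl
  rw [hscale, hp _ l hl, ← add_assoc] at h
  exact smul_right_injective F (Real.rpow_pos_of_pos hl α).ne' h.symm

variable [TopologicalSpace E] [ContinuousAdd E] [ContinuousSMul ℝ E]
  [TopologicalSpace F] [T2Space F]

theorem periodic_sub (hcont : Continuous u) (hp : IsHomogeneousAbout u α p)
    (hq : IsHomogeneousAbout u α q) : Periodic u (q - p) := by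
  intro y
  obtain ⟨z, rfl⟩ : ∃ z, y = p + z := ⟨y - p, by rw [add_sub_cancel]⟩
  have hlim : Tendsto (fun l : ℝ => u (p + l⁻¹ • (q - p) + z)) atTop (𝓝 (u (p + z))) := by
    have hpath : Continuous fun t : ℝ => u (p + t • (q - p) + z) := by fun_prop
    simpa [comp_def] using (hpath.tendsto 0).comp tendsto_inv_atTop_zero
  have hconst : Tendsto (fun l : ℝ => u (p + l⁻¹ • (q - p) + z)) atTop (𝓝 (u (q + z))) :=
    tendsto_const_nhds.congr' <| (eventually_gt_atTop 0).mono fun l hl =>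
      hp.apply_add_eq_apply_add_inv_smul hq z hl
  rw [add_right_comm, add_sub_cancel, tendsto_nhds_unique hconst hlim]

end IsHomogeneousAbout

theorem multi_point_homogeneity_general {n m k : ℕ} (u : (Fin n → ℝ) → (Fin m → ℝ))
    (hcont : Continuous u)
    (α : ℝ)
    (x : Fin (k + 1) → (Fin n → ℝ))
    (hu0 : ∀ i, u (x i) = 0)
    (hhom : ∀ (i : Fin (k + 1)) (z : Fin n → ℝ) (l : ℝ), 0 < l →
      u (x i + l • z) = l ^ α • u (x i + z)) :
    (∀ (y : Fin n → ℝ) (v : Fin n → ℝ),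
        v ∈ Submodule.span ℝ (Set.range fun i : Fin k => x i.succ - x 0) →
        u (y + v) = u y) ∧
    (∀ v ∈ Submodule.span ℝ (Set.range fun i : Fin k => x i.succ - x 0),
        u (x 0 + v) = 0 ∧
        ∀ (z : Fin n → ℝ) (l : ℝ), 0 < l →
          u ((x 0 + v) + l • z) = l ^ α • u ((x 0 + v) + z)) := by
  have hom : ∀ i, IsHomogeneousAbout u α (x i) := hhom
  have periodic : ∀ v ∈ Submodule.span ℝ (Set.range fun i : Fin k => x i.succ - x 0),
      Periodic u v := fun v ↦ (hom 0).periodic_of_mem_span <| by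
    rintro _ ⟨i, rfl⟩
    exact (hom 0).periodic_sub hcont (hom i.succ)
  exact ⟨fun y v hv ↦ periodic v hv y, fun v hv ↦
    ⟨by rw [periodic v hv, hu0], (hom 0).add_period (periodic v hv)⟩⟩

/-- If a continuous nonconstant map `u : ℝⁿ → ℝᵐ` is homogeneous of the same degree `α > 0`
about points `x 0, …, x k` with `x 1 - x 0, …, x k - x 0` linearly independent, then `u` is
invariant under `V = span {x i - x 0}` and is homogeneous of degree `α` about every point of
the affine subspace `x 0 + V`. -/
theorem multi_point_homogeneity {n m k : ℕ} (u : (Fin n → ℝ) → (Fin m → ℝ))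
    (hcont : Continuous u) (hnc : ∃ a b, u a ≠ u b)
    (α : ℝ) (hα : 0 < α)
    (x : Fin (k + 1) → (Fin n → ℝ))
    (hli : LinearIndependent ℝ (fun i : Fin k => x i.succ - x 0))
    (hu0 : ∀ i, u (x i) = 0)
    (hhom : ∀ (i : Fin (k + 1)) (z : Fin n → ℝ) (l : ℝ), 0 < l →
      u (x i + l • z) = l ^ α • u (x i + z)) :
    (∀ (y : Fin n → ℝ) (v : Fin n → ℝ),
        v ∈ Submodule.span ℝ (Set.range fun i : Fin k => x i.succ - x 0) →
        u (y + v) = u y) ∧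
    (∀ v ∈ Submodule.span ℝ (Set.range fun i : Fin k => x i.succ - x 0),
        u (x 0 + v) = 0 ∧
        ∀ (z : Fin n → ℝ) (l : ℝ), 0 < l →
          u ((x 0 + v) + l • z) = l ^ α • u ((x 0 + v) + z)) :=
  multi_point_homogeneity_general u hcont α x hu0 hhom
end

section
/- Let f : (0,1] → ℝ be nondecreasing, and let 0 < a ≤ t with 64t ≤ 1. Then ∫_a^t ( f(32s) − f(s) ) / s ds ≤ 6 · log 2 · ( f(1) − f(a) ). -/
/-!
Substituting `u = 32 s` turns `∫_a^t f(32s)/s ds` into `∫_{32a}^{32t} f(u)/u du`, so the integral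
telescopes to `∫_t^{32t} f(s)/s ds - ∫_a^{32a} f(s)/s ds`. Both are integrals of `f` against `ds/s`
over intervals of logarithmic length `log 32 = 5 log 2`, on which `f` lies between `f a` and `f 1`.
-/

open intervalIntegral Real Set
open MeasureTheory (volume)

lemma comp_mul_div_self_eq (f : ℝ → ℝ) {c : ℝ} (hc : c ≠ 0) (s : ℝ) :
    f (c * s) / s = c * (f (c * s) / (c * s)) := by
  rw [← mul_div_assoc, mul_div_mul_left _ _ hc]

lemma integral_comp_mul_div_self (f : ℝ → ℝ) {c : ℝ} (hc : c ≠ 0) (a b : ℝ) :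
    ∫ s in a..b, f (c * s) / s = ∫ s in c * a..c * b, f s / s := by
  simp_rw [comp_mul_div_self_eq f hc]
  rw [integral_const_mul, ← smul_eq_mul, smul_integral_comp_mul_left (fun s => f s / s) c]

lemma integral_comp_mul_sub_div_self {f : ℝ → ℝ} {c a b : ℝ} (hc : c ≠ 0)
    (hab : IntervalIntegrable (fun s => f s / s) volume a b)
    (hcab : IntervalIntegrable (fun s => f s / s) volume (c * a) (c * b))
    (hca : IntervalIntegrable (fun s => f s / s) volume (c * a) a) :
    ∫ s in a..b, (f (c * s) - f s) / s
      = (∫ s in b..c * b, f s / s) - ∫ s in a..c * a, f s / s := by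
  have hcomp : IntervalIntegrable (fun s => f (c * s) / s) volume a b := by
    simpa only [mul_div_cancel_left₀ _ hc, ← comp_mul_div_self_eq f hc] using
      (hcab.comp_mul_left (c := c)).const_mul c
  simp only [sub_div]
  rw [integral_sub hcomp hab, integral_comp_mul_div_self f hc,
    integral_interval_sub_interval_comm' hcab hab hca]

namespace MonotoneOn

variable {f : ℝ → ℝ} {a b : ℝ}

lemma intervalIntegrable_div_self (hf : MonotoneOn f (Icc a b)) (ha : 0 < a) (hab : a ≤ b) :
    IntervalIntegrable (fun s => f s / s) volume a b := by
  rw [← uIcc_of_le hab] at hf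
  simpa only [div_eq_mul_inv] using hf.intervalIntegrable.mul_continuousOn
    (continuousOn_inv₀.mono (subset_compl_singleton_iff.2 (notMem_uIcc_of_lt ha (ha.trans_le hab))))

lemma integral_div_self_le (hf : MonotoneOn f (Icc a b)) (ha : 0 < a) (hab : a ≤ b) :
    ∫ s in a..b, f s / s ≤ f b * log (b / a) := by
  have hinv := intervalIntegrable_inv_iff.2 (Or.inr (notMem_uIcc_of_lt ha (ha.trans_le hab)))
  rw [← integral_inv_of_pos ha (ha.trans_le hab), ← integral_const_mul]
  refine integral_mono_on hab (hf.intervalIntegrable_div_self ha hab) (hinv.const_mul _)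
    fun s hs => ?_
  rw [div_eq_mul_inv]
  exact mul_le_mul_of_nonneg_right (hf hs (right_mem_Icc.2 hab) hs.2)
    (inv_nonneg.2 (ha.le.trans hs.1))

lemma le_integral_div_self (hf : MonotoneOn f (Icc a b)) (ha : 0 < a) (hab : a ≤ b) :
    f a * log (b / a) ≤ ∫ s in a..b, f s / s := by
  have hinv := intervalIntegrable_inv_iff.2 (Or.inr (notMem_uIcc_of_lt ha (ha.trans_le hab)))
  rw [← integral_inv_of_pos ha (ha.trans_le hab), ← integral_const_mul]
  refine integral_mono_on hab (hinv.const_mul _) (hf.intervalIntegrable_div_self ha hab)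
    fun s hs => ?_
  rw [div_eq_mul_inv]
  exact mul_le_mul_of_nonneg_right (hf (left_mem_Icc.2 hab) hs hs.1)
    (inv_nonneg.2 (ha.le.trans hs.1))

lemma integral_comp_mul_sub_div_self_le {c : ℝ} (hf : MonotoneOn f (Icc a (c * b)))
    (ha : 0 < a) (hab : a ≤ b) (hc : 1 ≤ c) :
    ∫ s in a..b, (f (c * s) - f s) / s ≤ log c * (f (c * b) - f a) := by
  have hb : b ≤ c * b := le_mul_of_one_le_left (ha.le.trans hab) hc
  have hca : a ≤ c * a := le_mul_of_one_le_left ha.le hc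
  have hcab : c * a ≤ c * b := mul_le_mul_of_nonneg_left hab (by linarith)
  have hint : ∀ x y, a ≤ x → x ≤ y → y ≤ c * b →
      IntervalIntegrable (fun s => f s / s) volume x y := fun x y hx hxy hy =>
    (hf.mono (Icc_subset_Icc hx hy)).intervalIntegrable_div_self (ha.trans_le hx) hxy
  have hupper := integral_div_self_le (hf.mono (Icc_subset_Icc hab le_rfl)) (ha.trans_le hab) hb
  have hlower := le_integral_div_self (b := c * a) (hf.mono (Icc_subset_Icc le_rfl hcab)) ha hca
  rw [mul_div_cancel_right₀ _ (ha.trans_le hab).ne'] at hupper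
  rw [mul_div_cancel_right₀ _ ha.ne'] at hlower
  rw [integral_comp_mul_sub_div_self (by linarith) (hint a b le_rfl hab hb)
    (hint _ _ hca hcab le_rfl) (hint a (c * a) le_rfl hca hcab).symm]
  linarith

end MonotoneOn

/-- Dyadic estimate: for `f` nondecreasing on `(0,1]` and `0 < a ≤ t` with `64 t ≤ 1`,
`∫_a^t (f(32 s) − f(s))/s ds ≤ 6 log 2 (f(1) − f(a))`. -/
theorem dyadic_pinching_integral_bound (f : ℝ → ℝ)
    (hf : MonotoneOn f (Set.Ioc (0 : ℝ) 1))
    (a t : ℝ) (ha : 0 < a) (hat : a ≤ t) (ht : 64 * t ≤ 1) :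
    (∫ s in a..t, (f (32 * s) - f s) / s) ≤ 6 * Real.log 2 * (f 1 - f a) := by
  have hf' : MonotoneOn f (Icc a (32 * t)) :=
    hf.mono fun s hs => ⟨ha.trans_le hs.1, by linarith [hs.2]⟩
  have hf32 : f (32 * t) ≤ f 1 := hf ⟨by linarith, by linarith⟩ ⟨one_pos, le_rfl⟩ (by linarith)
  have hfa : f a ≤ f 1 := hf ⟨ha, by linarith⟩ ⟨one_pos, le_rfl⟩ (by linarith)
  have hlog2 : 0 < log 2 := log_pos one_lt_two
  have hlog32 : log 32 = 5 * log 2 := by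
    rw [show (32 : ℝ) = 2 ^ 5 by norm_num, log_pow]
    norm_num
  calc (∫ s in a..t, (f (32 * s) - f s) / s) ≤ log 32 * (f (32 * t) - f a) :=
        hf'.integral_comp_mul_sub_div_self_le ha hat (by norm_num)
    _ ≤ 6 * log 2 * (f 1 - f a) := by
        rw [hlog32]
        nlinarith
end

section
/- Let u : ℝⁿ → ℝᵐ be continuous and nonconstant. Suppose u is invariant under a k-dimensional subspace V ⊂ ℝⁿ and homogeneous of degree α > 0 about a point x₀, and suppose u is also homogeneous of some degree β > 0 about a point y with y − x₀ ∉ V. Then u is invariant under the (k+1)-dimensional subspace span(V ∪ {y − x₀}). -/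
/-- Cone splitting: if a continuous nonconstant `u` is invariant under a `k`-dimensional
subspace `V`, homogeneous about `x₀`, and also homogeneous about a point `y` with
`y - x₀ ∉ V`, then `u` is invariant under the `(k+1)`-dimensional subspace
`span (V ∪ {y - x₀})`. -/
theorem cone_splitting_invariance {n m k : ℕ} (u : (Fin n → ℝ) → (Fin m → ℝ))
    (hcont : Continuous u) (hnc : ∃ a b, u a ≠ u b)
    (V : Submodule ℝ (Fin n → ℝ)) (hV : Module.finrank ℝ V = k)
    (hinv : ∀ (x : Fin n → ℝ) (v : Fin n → ℝ), v ∈ V → u (x + v) = u x)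
    (x₀ y : Fin n → ℝ) (hy : y - x₀ ∉ V)
    (α β : ℝ) (hα : 0 < α) (hβ : 0 < β)
    (hux₀ : u x₀ = 0) (huy : u y = 0)
    (hhomx₀ : ∀ (z : Fin n → ℝ) (l : ℝ), 0 < l → u (x₀ + l • z) = l ^ α • u (x₀ + z))
    (hhomy : ∀ (z : Fin n → ℝ) (l : ℝ), 0 < l → u (y + l • z) = l ^ β • u (y + z)) :
    Module.finrank ℝ (Submodule.span ℝ ((V : Set (Fin n → ℝ)) ∪ {y - x₀})) = k + 1 ∧
    ∀ (x : Fin n → ℝ) (v : Fin n → ℝ),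
      v ∈ Submodule.span ℝ ((V : Set (Fin n → ℝ)) ∪ {y - x₀}) → u (x + v) = u x := by
  set w : Fin n → ℝ := y - x₀ with hw
  -- Key step: homogeneity about both points gives a scaling law along `w`.
  have keyA : ∀ (x : Fin n → ℝ) (t : ℝ), t < 1 →
      u (x + t • w) = (1 - t) ^ (β - α) • u x := by
    intro x t ht
    have h1t : (0:ℝ) < 1 - t := by linarith
    set l : ℝ := (1 - t)⁻¹ with hl
    have hlpos : 0 < l := inv_pos.mpr h1t
    -- homogeneity about x₀
    have e1 : u (x₀ + l • (x - x₀)) = l ^ α • u x := by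
      have := hhomx₀ (x - x₀) l hlpos
      rwa [show x₀ + (x - x₀) = x by abel] at this
    -- homogeneity about y
    have e2 : u (y + l⁻¹ • (x₀ + l • (x - x₀) - y))
        = (l⁻¹) ^ β • u (x₀ + l • (x - x₀)) := by
      have := hhomy (x₀ + l • (x - x₀) - y) l⁻¹ (inv_pos.mpr hlpos)
      rwa [show y + (x₀ + l • (x - x₀) - y) = x₀ + l • (x - x₀) by abel] at this
    have hlinv : l⁻¹ = 1 - t := by rw [hl, inv_inv]
    have hpt : y + l⁻¹ • (x₀ + l • (x - x₀) - y) = x + t • w := by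
      rw [hlinv, hw]
      have hmul : (1 - t) • (l • (x - x₀)) = x - x₀ := by
        rw [smul_smul, ← hlinv, inv_mul_cancel₀ (ne_of_gt hlpos), one_smul]
      rw [smul_sub, smul_add, hmul]
      rw [show t • (y - x₀) = y - x₀ - (1-t) • (y - x₀) by
        rw [sub_smul, one_smul]; abel]
      rw [smul_sub]
      abel
    rw [hpt, e1] at e2
    rw [e2, smul_smul]
    congr 1
    rw [hlinv, hl, Real.inv_rpow h1t.le, ← Real.rpow_neg h1t.le,
      ← Real.rpow_add h1t, ← sub_eq_add_neg]
  -- The two exponents must be equal, since u is nonconstant.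
  have hαβ : β = α := by
    obtain ⟨a, b, hab⟩ := hnc
    obtain ⟨c, hc⟩ : ∃ c, u c ≠ 0 := by
      by_cases h : u a = 0
      · exact ⟨b, fun h' => hab (h.trans h'.symm)⟩
      · exact ⟨a, h⟩
    have h1 := keyA c (1/2) (by norm_num)
    have h2 := keyA (c + (1/2 : ℝ) • w) (-(1/2)) (by norm_num)
    rw [show c + (1/2 : ℝ) • w + (-(1/2) : ℝ) • w = c by
      rw [neg_smul]; abel] at h2
    rw [h1, smul_smul] at h2
    have hmul : (1 - -(1/2) : ℝ) ^ (β - α) * (1 - 1/2 : ℝ) ^ (β - α)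
        = (3/4 : ℝ) ^ (β - α) := by
      rw [← Real.mul_rpow (by norm_num) (by norm_num)]; norm_num
    rw [hmul] at h2
    have hone : ((3/4 : ℝ) ^ (β - α) - 1) • u c = 0 := by
      rw [sub_smul, one_smul, ← h2, sub_self]
    rcases smul_eq_zero.mp hone with h | h
    · have hr : (3/4 : ℝ) ^ (β - α) = 1 := by linarith [sub_eq_zero.mp h]
      have hlog : (β - α) * Real.log (3/4) = 0 := by
        rw [← Real.log_rpow (by norm_num) (β - α), hr, Real.log_one]
      have hl34 : Real.log (3/4 : ℝ) ≠ 0 := by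
        intro h0
        rcases Real.log_eq_zero.mp h0 with h' | h' | h' <;> norm_num at h'
      have : β - α = 0 := by
        rcases mul_eq_zero.mp hlog with h' | h'
        · exact h'
        · exact absurd h' hl34
      linarith
    · exact absurd h hc
  -- hence translation invariance along w for small steps
  have step : ∀ (x : Fin n → ℝ) (t : ℝ), t < 1 → u (x + t • w) = u x := by
    intro x t ht
    rw [keyA x t ht, hαβ, sub_self, Real.rpow_zero, one_smul]
  -- and for all steps
  have lineinv : ∀ (x : Fin n → ℝ) (t : ℝ), u (x + t • w) = u x := by
    intro x t
    rcases lt_or_ge t 1 with h | h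
    · exact step x t h
    · have := step (x + t • w) (-t) (by linarith)
      rw [show x + t • w + (-t) • w = x by rw [neg_smul]; abel] at this
      exact this.symm
  have hwV : w ∉ V := hy
  have hw0 : w ≠ 0 := by
    intro h0
    exact hwV (h0 ▸ V.zero_mem)
  -- span (V ∪ {w}) = V ⊔ ℝ ∙ w
  have hspan : Submodule.span ℝ ((V : Set (Fin n → ℝ)) ∪ {w})
      = V ⊔ Submodule.span ℝ {w} := by
    rw [Submodule.span_union, Submodule.span_eq]
  constructor
  · rw [hspan]
    have hinf : V ⊓ Submodule.span ℝ {w} = ⊥ := by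
      rw [Submodule.eq_bot_iff]
      rintro z ⟨hzV, hzw⟩
      obtain ⟨t, rfl⟩ := Submodule.mem_span_singleton.mp hzw
      by_cases ht : t = 0
      · rw [ht, zero_smul]
      · exfalso
        apply hwV
        have : t⁻¹ • (t • w) ∈ V := V.smul_mem _ hzV
        rwa [smul_smul, inv_mul_cancel₀ ht, one_smul] at this
    have := Submodule.finrank_sup_add_finrank_inf_eq V (Submodule.span ℝ {w})
    rw [hinf, finrank_bot, add_zero, hV, finrank_span_singleton hw0] at this
    exact this
  · intro x v hv
    rw [hspan, Submodule.mem_sup] at hv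
    obtain ⟨v₀, hv₀, z, hz, rfl⟩ := hv
    obtain ⟨t, rfl⟩ := Submodule.mem_span_singleton.mp hz
    rw [show x + (v₀ + t • w) = x + v₀ + t • w by abel]
    rw [lineinv (x + v₀) t]
    exact hinv x v₀ hv₀
end
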